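/- Let (U,s,h) be an SL-structure satisfying the septraction M₁ −⊛ M₂ of two minterms: there exists h' disjoint from h with (U,s,h') ⊨ M₁ and (U,s,h ⊎ h') ⊨ M₂. Suppose M₁ contains |h| ≥ min₁ and |h| < max₁, and M₂ contains |h| ≥ min₂ and |h| < max₂ (natural numbers or ∞). Then |dom(h)| ≥ min₂ − max₁ + 1 and |dom(h)| < max₂ − min₁. Moreover, every variable x allocated in h' (s(x) ∈ dom(h')) satisfies s(x) ∉ dom(h). -/

import Mathlib

/-- Domain of a heap: locations where the heap is defined. -/
def hdom {U : Type*} {k : ℕ} (h : U → Option (Fin k → U)) : Set U := {u | (h u).isSome}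

/-- Two heaps are disjoint iff their domains are disjoint. -/
def hdisj {U : Type*} {k : ℕ} (h₁ h₂ : U → Option (Fin k → U)) : Prop :=
  ∀ u, h₁ u = none ∨ h₂ u = none

/-- Union of (disjoint) heaps. -/
def hunion {U : Type*} {k : ℕ} (h₁ h₂ : U → Option (Fin k → U)) :
    U → Option (Fin k → U) :=
  fun u => (h₁ u).elim (h₂ u) some

/-! Since `h` and `h'` are disjoint, `|dom(h ⊎ h')| = |dom(h)| + |dom(h')|`; the two cardinality
bounds follow by substituting the bounds on `|dom(h')|` into those on `|dom(h ⊎ h')|`, and a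
variable allocated in `h'` cannot also be allocated in `h` by disjointness. -/

section Heap

variable {U : Type*} {k : ℕ}

theorem hdom_hunion (h₁ h₂ : U → Option (Fin k → U)) :
    hdom (hunion h₁ h₂) = hdom h₁ ∪ hdom h₂ := by
  ext u
  simp only [hdom, hunion, Set.mem_ofPred_eq, Set.mem_union]
  cases h₁ u <;> simp

theorem disjoint_hdom_of_hdisj {h₁ h₂ : U → Option (Fin k → U)} (hd : hdisj h₁ h₂) :
    Disjoint (hdom h₁) (hdom h₂) := by
  rw [Set.disjoint_left]
  intro u hu₁ hu₂
  rcases hd u with h0 | h0 <;> simp [hdom, h0] at hu₁ hu₂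

theorem ncard_hdom_hunion {h₁ h₂ : U → Option (Fin k → U)} (hd : hdisj h₁ h₂)
    (hfin₁ : (hdom h₁).Finite) (hfin₂ : (hdom h₂).Finite) :
    (hdom (hunion h₁ h₂)).ncard = (hdom h₁).ncard + (hdom h₂).ncard := by
  rw [hdom_hunion, Set.ncard_union_eq (disjoint_hdom_of_hdisj hd) hfin₁ hfin₂]

end Heap

theorem ENat.add_one_le_add_of_le_add_of_lt {a b lo hi : ℕ∞} (hlo : lo ≤ a + b) (hb : b < hi) :
    lo + 1 ≤ a + hi :=
  calc lo + 1 ≤ a + b + 1 := by gcongr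
    _ = a + (b + 1) := add_assoc a b 1
    _ ≤ a + hi := by gcongr; exact Order.add_one_le_of_lt hb

theorem stmt14_general {U Var : Type*} {k : ℕ} (s : Var → U)
    (h h' : U → Option (Fin k → U))
    (hfin : (hdom h).Finite) (hfin' : (hdom h').Finite)
    (hd : hdisj h h')
    (min₁ max₁ min₂ max₂ : ℕ∞)
    (h1min : min₁ ≤ ((hdom h').ncard : ℕ∞))
    (h1max : ((hdom h').ncard : ℕ∞) < max₁)
    (h2min : min₂ ≤ ((hdom (hunion h h')).ncard : ℕ∞))
    (h2max : ((hdom (hunion h h')).ncard : ℕ∞) < max₂) :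
    (min₂ + 1 ≤ ((hdom h).ncard : ℕ∞) + max₁) ∧
    (((hdom h).ncard : ℕ∞) + min₁ < max₂) ∧
    (∀ x : Var, s x ∈ hdom h' → s x ∉ hdom h) := by
  rw [ncard_hdom_hunion hd hfin hfin', Nat.cast_add] at h2min h2max
  exact ⟨ENat.add_one_le_add_of_le_add_of_lt h2min h1max,
    lt_of_le_of_lt (add_le_add_right h1min _) h2max,
    fun x hx' hx ↦ Set.disjoint_left.mp (disjoint_hdom_of_hdisj hd) hx hx'⟩

/-- if `h'` disjoint from `h` witnesses the septraction
`M₁ −⊛ M₂`, with `min₁ ≤ |dom(h')| < max₁` and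
`min₂ ≤ |dom(h ⊎ h')| < max₂` (bounds in `ℕ ∪ {∞}`), then
`min₂ − max₁ + 1 ≤ |dom(h)|` (i.e. `min₂ + 1 ≤ |dom(h)| + max₁`),
`|dom(h)| < max₂ − min₁` (i.e. `|dom(h)| + min₁ < max₂`), and every variable
allocated in `h'` is not allocated in `h`. -/
theorem stmt14 {U Var : Type*} [Nonempty U] {k : ℕ} (hk : 1 ≤ k) (s : Var → U)
    (h h' : U → Option (Fin k → U))
    (hfin : (hdom h).Finite) (hfin' : (hdom h').Finite)
    (hd : hdisj h h')
    (min₁ max₁ min₂ max₂ : ℕ∞)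
    (h1min : min₁ ≤ ((hdom h').ncard : ℕ∞))
    (h1max : ((hdom h').ncard : ℕ∞) < max₁)
    (h2min : min₂ ≤ ((hdom (hunion h h')).ncard : ℕ∞))
    (h2max : ((hdom (hunion h h')).ncard : ℕ∞) < max₂) :
    (min₂ + 1 ≤ ((hdom h).ncard : ℕ∞) + max₁) ∧
    (((hdom h).ncard : ℕ∞) + min₁ < max₂) ∧
    (∀ x : Var, s x ∈ hdom h' → s x ∉ hdom h) :=
  stmt14_general s h h' hfin hfin' hd min₁ max₁ min₂ max₂ h1min h1max h2min h2max
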